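/- arXiv:2311.00279 — 5 statements merged into one kernel-verified Lean document; each statement's English description precedes it below -/
import Mathlib

section
/- Let u be a degree-two vertex in a finite simple graph G with adjacent neighbors v and w, and suppose v and w have a common neighbor other than u. Then {u,v,w} is a maximal clique of G, and the maximal cliques of size ≥ 2 of G are exactly {u,v,w} together with the maximal cliques of size ≥ 2 of G - u (the edge (v,w) is retained). -/
open SimpleGraph

/-- A maximal clique: a clique not properly contained in any other clique. -/
def MaximalClique {V : Type*} (G : SimpleGraph V) (S : Set V) : Prop :=
  G.IsClique S ∧ ∀ T : Set V, G.IsClique T → S ⊆ T → S = T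

/-- The graph obtained from `G` by deleting vertex `u` (removing all its incident edges). -/
def delVert {V : Type*} (G : SimpleGraph V) (u : V) : SimpleGraph V where
  Adj a b := G.Adj a b ∧ a ≠ u ∧ b ≠ u
  symm := by constructor; intro a b h; exact ⟨h.1.symm, h.2.2, h.2.1⟩
  loopless := by constructor; intro a h; exact G.ne_of_adj h.1 rfl

/-!
Since `N(u) = {v, w}` is a clique, `{u, v, w}` is the closed neighbourhood of a simplicial
vertex and hence the unique maximal clique through `u`. A maximal clique avoiding `u` stays
maximal in `G - u`. Conversely a maximal clique `S` of `G - u` (which avoids `u` once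
`|S| ≥ 2`) can only be enlarged in `G` by adding `u`, which requires `S ⊆ {v, w}`, i.e.
`S = {v, w}`; the common neighbour `x ≠ u` of `v` and `w` shows that `{v, w}` is not
maximal in `G - u`.
-/

section

variable {V : Type*} {G : SimpleGraph V} {S : Set V} {u v w x : V}

theorem delVert_le (G : SimpleGraph V) (u : V) : delVert G u ≤ G :=
  fun _ _ h => h.1

theorem SimpleGraph.IsClique.delVert_of_notMem (hS : G.IsClique S) (hu : u ∉ S) :
    (delVert G u).IsClique S :=
  fun _ ha _ hb hab => ⟨hS ha hb hab, ne_of_mem_of_not_mem ha hu, ne_of_mem_of_not_mem hb hu⟩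

theorem notMem_of_isClique_delVert (hS : (delVert G u).IsClique S) (h2 : 2 ≤ S.ncard) :
    u ∉ S := by
  intro huS
  have hsub : S ⊆ {u} := fun t ht => by
    by_contra htu
    exact (hS huS ht (Ne.symm htu)).2.1 rfl
  have := Set.ncard_le_ncard hsub (Set.finite_singleton u)
  rw [Set.ncard_singleton] at this
  omega

theorem subset_insert_neighborSet_of_isClique (hS : G.IsClique S) (hu : u ∈ S) :
    S ⊆ insert u (G.neighborSet u) := fun t ht => by
  by_cases htu : t = u
  · exact Or.inl htu
  · exact Or.inr (hS hu ht (Ne.symm htu))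

theorem isClique_insert_neighborSet (h : G.IsClique (G.neighborSet u)) :
    G.IsClique (insert u (G.neighborSet u)) :=
  h.insert fun _ hb _ => hb

theorem maximalClique_insert_neighborSet (h : G.IsClique (G.neighborSet u)) :
    MaximalClique G (insert u (G.neighborSet u)) :=
  ⟨isClique_insert_neighborSet h, fun _ hT hsub =>
    hsub.antisymm (subset_insert_neighborSet_of_isClique hT (hsub (Set.mem_insert u _)))⟩

theorem MaximalClique.eq_insert_neighborSet (hS : MaximalClique G S) (hu : u ∈ S)
    (h : G.IsClique (G.neighborSet u)) : S = insert u (G.neighborSet u) :=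
  hS.2 _ (isClique_insert_neighborSet h) (subset_insert_neighborSet_of_isClique hS.1 hu)

theorem MaximalClique.mem_of_forall_adj (hS : MaximalClique G S)
    (hx : ∀ s ∈ S, x ≠ s → G.Adj x s) : x ∈ S := by
  rw [hS.2 _ (hS.1.insert hx) (Set.subset_insert x S)]
  exact Set.mem_insert x S

theorem MaximalClique.delVert_of_notMem (hS : MaximalClique G S) (hu : u ∉ S) :
    MaximalClique (delVert G u) S :=
  ⟨hS.1.delVert_of_notMem hu, fun T hT hST => hS.2 T (hT.mono (delVert_le G u)) hST⟩

theorem MaximalClique.of_delVert (hS : MaximalClique (delVert G u) S)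
    (hN : ¬ S ⊆ insert u (G.neighborSet u)) : MaximalClique G S := by
  refine ⟨hS.1.mono (delVert_le G u), fun T hT hST => ?_⟩
  by_cases huT : u ∈ T
  · exact absurd (hST.trans (subset_insert_neighborSet_of_isClique hT huT)) hN
  · exact hS.2 T (hT.delVert_of_notMem huT) hST

theorem not_maximalClique_delVert_pair (hv : v ≠ u) (hw : w ≠ u) (hxu : x ≠ u)
    (hvx : G.Adj v x) (hwx : G.Adj w x) : ¬ MaximalClique (delVert G u) {v, w} := by
  intro hS
  have hx : x ∈ ({v, w} : Set V) := hS.mem_of_forall_adj <| by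
    rintro s (rfl | rfl) _
    exacts [⟨hvx.symm, hxu, hv⟩, ⟨hwx.symm, hxu, hw⟩]
  rcases hx with rfl | rfl
  exacts [hvx.ne rfl, hwx.ne rfl]

end

theorem stmt_4_general {V : Type*} (G : SimpleGraph V) (u v w : V)
    (hu : G.neighborSet u = {v, w}) (hadj : G.Adj v w)
    (hcn : ∃ x, x ≠ u ∧ x ∈ G.neighborSet v ∩ G.neighborSet w) :
    MaximalClique G {u, v, w} ∧
    {S : Set V | MaximalClique G S ∧ 2 ≤ S.ncard} =
      insert {u, v, w} {S : Set V | MaximalClique (delVert G u) S ∧ 2 ≤ S.ncard} := by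
  have hN : G.IsClique (G.neighborSet u) := hu ▸ isClique_pair.mpr fun _ => hadj
  have hclosed : insert u (G.neighborSet u) = {u, v, w} := by rw [hu]
  have huv : G.Adj u v := by simp [← mem_neighborSet, hu]
  have huw : G.Adj u w := by simp [← mem_neighborSet, hu]
  have hmax : MaximalClique G {u, v, w} := hclosed ▸ maximalClique_insert_neighborSet hN
  refine ⟨hmax, Set.ext fun S => ⟨?_, ?_⟩⟩
  · rintro ⟨hS, h2⟩
    by_cases huS : u ∈ S
    · exact Or.inl (hclosed ▸ hS.eq_insert_neighborSet huS hN)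
    · exact Or.inr ⟨hS.delVert_of_notMem huS, h2⟩
  · rintro (rfl | ⟨hS, h2⟩)
    · refine ⟨hmax, ?_⟩
      rw [Set.ncard_eq_three.mpr ⟨u, v, w, huv.ne, huw.ne, hadj.ne, rfl⟩]
      norm_num
    · refine ⟨hS.of_delVert fun hsub => ?_, h2⟩
      have huS := notMem_of_isClique_delVert hS.1 h2
      have hS_eq : S = {v, w} :=
        Set.eq_of_subset_of_ncard_le (fun s hs => (hclosed ▸ hsub hs).resolve_left
          (ne_of_mem_of_not_mem hs huS)) (by rwa [Set.ncard_pair hadj.ne])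
      obtain ⟨x, hxu, hvx, hwx⟩ := hcn
      exact not_maximalClique_delVert_pair huv.ne' huw.ne' hxu hvx hwx (hS_eq ▸ hS)

theorem stmt_4 {V : Type*} [Fintype V] (G : SimpleGraph V) (u v w : V)
    (hvw : v ≠ w) (hu : G.neighborSet u = {v, w}) (hadj : G.Adj v w)
    (hcn : ∃ x, x ≠ u ∧ x ∈ G.neighborSet v ∩ G.neighborSet w) :
    MaximalClique G {u, v, w} ∧
    {S : Set V | MaximalClique G S ∧ 2 ≤ S.ncard} =
      insert {u, v, w} {S : Set V | MaximalClique (delVert G u) S ∧ 2 ≤ S.ncard} :=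
  stmt_4_general G u v w hu hadj hcn
end

section
/- Let (u,v) be an edge of a finite simple graph G such that u and v have no common neighbor. Then {u,v} is a maximal clique of G, and the maximal cliques of size ≥ 2 of G are exactly {u,v} together with the maximal cliques of size ≥ 2 of the graph G' obtained by deleting the edge (u,v). -/
open SimpleGraph

section

variable {V : Type*} {G H : SimpleGraph V} {S : Set V} {u v : V}

theorem MaximalClique.of_le (hS : MaximalClique G S) (hHG : H ≤ G) (hSH : H.IsClique S) :
    MaximalClique H S :=
  ⟨hSH, fun T hT hST => hS.2 T (hT.mono hHG) hST⟩

theorem maximalClique_pair_of_neighborSet_inter_eq_empty (hadj : G.Adj u v)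
    (hcn : G.neighborSet u ∩ G.neighborSet v = ∅) : MaximalClique G {u, v} := by
  refine ⟨isClique_pair.2 fun _ => hadj, fun T hT huvT => huvT.antisymm fun w hwT => ?_⟩
  by_contra hw
  simp only [Set.mem_insert_iff, Set.mem_singleton_iff, not_or] at hw
  exact Set.eq_empty_iff_forall_notMem.1 hcn w
    ⟨hT (huvT (by simp)) hwT (Ne.symm hw.1), hT (huvT (by simp)) hwT (Ne.symm hw.2)⟩

theorem isClique_deleteEdges_edge_iff (huv : u ≠ v) :
    (G.deleteEdges {s(u, v)}).IsClique S ↔ G.IsClique S ∧ ¬(u ∈ S ∧ v ∈ S) := by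
  constructor
  · intro hS
    refine ⟨hS.mono (deleteEdges_le _), fun ⟨hu, hv⟩ => ?_⟩
    simpa using (deleteEdges_adj.1 (hS hu hv huv)).2
  · rintro ⟨hS, huvS⟩ a ha b hb hab
    refine deleteEdges_adj.2 ⟨hS ha hb hab, fun h => ?_⟩
    simp only [Set.mem_singleton_iff, Sym2.eq_iff] at h
    rcases h with ⟨rfl, rfl⟩ | ⟨rfl, rfl⟩
    exacts [huvS ⟨ha, hb⟩, huvS ⟨hb, ha⟩]

/-- A clique `T ⊇ S` of `G` containing `u` and `v` must be `{u, v}`, which is too small to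
contain the clique `S` of `G ∖ uv` once `2 ≤ |S|`; any other `T` is a clique of `G ∖ uv`. -/
theorem MaximalClique.of_deleteEdges (hadj : G.Adj u v)
    (hcn : G.neighborSet u ∩ G.neighborSet v = ∅)
    (hS : MaximalClique (G.deleteEdges {s(u, v)}) S) (hcard : 2 ≤ S.ncard) :
    MaximalClique G S := by
  have huv := hadj.ne
  obtain ⟨hSG, hSuv⟩ := (isClique_deleteEdges_edge_iff huv).1 hS.1
  refine ⟨hSG, fun T hT hST => ?_⟩
  by_cases hTuv : u ∈ T ∧ v ∈ T
  · have hTeq : {u, v} = T := (maximalClique_pair_of_neighborSet_inter_eq_empty hadj hcn).2 T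
      hT (Set.pair_subset hTuv.1 hTuv.2)
    have hSeq : S = {u, v} := Set.eq_of_subset_of_ncard_le (hTeq ▸ hST)
      (by rwa [Set.ncard_pair huv])
    exact absurd (by simp [hSeq]) hSuv
  · exact hS.2 T ((isClique_deleteEdges_edge_iff huv).2 ⟨hT, hTuv⟩) hST

end

theorem stmt_5_general {V : Type*} (G : SimpleGraph V) (u v : V)
    (hadj : G.Adj u v) (hcn : G.neighborSet u ∩ G.neighborSet v = ∅) :
    MaximalClique G {u, v} ∧
    {S : Set V | MaximalClique G S ∧ 2 ≤ S.ncard} =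
      insert {u, v}
        {S : Set V | MaximalClique (G.deleteEdges {s(u, v)}) S ∧ 2 ≤ S.ncard} := by
  have hmax := maximalClique_pair_of_neighborSet_inter_eq_empty hadj hcn
  refine ⟨hmax, Set.ext fun S => ⟨?_, ?_⟩⟩
  · rintro ⟨hS, hcard⟩
    by_cases huvS : u ∈ S ∧ v ∈ S
    · exact Or.inl (hmax.2 S hS.1 (Set.pair_subset huvS.1 huvS.2)).symm
    · refine Or.inr ⟨hS.of_le (deleteEdges_le _) ?_, hcard⟩
      exact (isClique_deleteEdges_edge_iff hadj.ne).2 ⟨hS.1, huvS⟩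
  · rintro (rfl | ⟨hS, hcard⟩)
    · exact ⟨hmax, (Set.ncard_pair hadj.ne).ge⟩
    · exact ⟨hS.of_deleteEdges hadj hcn hcard, hcard⟩

theorem stmt_5 {V : Type*} [Fintype V] (G : SimpleGraph V) (u v : V)
    (hadj : G.Adj u v) (hcn : G.neighborSet u ∩ G.neighborSet v = ∅) :
    MaximalClique G {u, v} ∧
    {S : Set V | MaximalClique G S ∧ 2 ≤ S.ncard} =
      insert {u, v}
        {S : Set V | MaximalClique (G.deleteEdges {s(u, v)}) S ∧ 2 ≤ S.ncard} :=
  stmt_5_general G u v hadj hcn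
end

section
/- Let (R, P, X) be a subproblem where R is a clique and every vertex of P ∪ X is adjacent to all of R. Let u ∈ P have exactly one neighbor v in P. If there exists w ∈ X adjacent to both u and v, then R ∪ {u, v} is not a maximal clique of G, and neither is R ∪ {u}. -/
open SimpleGraph

theorem not_maximalClique_of_forall_adj {V : Type*} {G : SimpleGraph V} {S : Set V} {w : V}
    (hw : ∀ x ∈ S, G.Adj w x) : ¬ MaximalClique G S := by
  rintro ⟨hS, hmax⟩
  have hwS : w ∉ S := fun h => G.loopless.irrefl w (hw w h)
  have hclique : G.IsClique (insert w S) := hS.insert fun x hx _ => hw x hx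
  exact hwS (hmax _ hclique (Set.subset_insert w S) ▸ Set.mem_insert w S)

theorem stmt_9_general {V : Type*} (G : SimpleGraph V) (R P X : Set V)
    (hadj : ∀ x ∈ P ∪ X, ∀ r ∈ R, G.Adj x r)
    (u v : V)
    (hw : ∃ w ∈ X, G.Adj w u ∧ G.Adj w v) :
    ¬ MaximalClique G (R ∪ {u, v}) ∧ ¬ MaximalClique G (R ∪ {u}) := by
  obtain ⟨w, hwX, hwu, hwv⟩ := hw
  have hw_adj : ∀ x ∈ R ∪ {u, v}, G.Adj w x := by
    rintro x (hxR | rfl | rfl)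
    · exact hadj w (Or.inr hwX) x hxR
    · exact hwu
    · exact hwv
  have hsub : R ∪ {u} ⊆ R ∪ {u, v} := Set.union_subset_union_right R (by simp)
  exact ⟨not_maximalClique_of_forall_adj hw_adj,
    not_maximalClique_of_forall_adj fun x hx => hw_adj x (hsub hx)⟩

theorem stmt_9 {V : Type*} [Fintype V] (G : SimpleGraph V) (R P X : Set V)
    (hR : G.IsClique R)
    (hadj : ∀ x ∈ P ∪ X, ∀ r ∈ R, G.Adj x r)
    (hdisj : Disjoint P X)
    (u v : V) (hu : u ∈ P)
    (hNu : G.neighborSet u ∩ P = {v})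
    (hw : ∃ w ∈ X, G.Adj w u ∧ G.Adj w v) :
    ¬ MaximalClique G (R ∪ {u, v}) ∧ ¬ MaximalClique G (R ∪ {u}) :=
  stmt_9_general G R P X hadj u v hw
end

section
/- Let (R, P, X) be a subproblem where R is a clique and every vertex of P ∪ X is adjacent to all of R. Let u ∈ P with N(u) ∩ P = {v}, and suppose no vertex of X is adjacent to both u and v. Then R ∪ {u, v} is a maximal clique of G. -/
open SimpleGraph

/-!
Every common neighbour `t` of `R ∪ {u, v}` is adjacent to all of `R`, so it lies in `P` or `X`.
In `P` it would be a neighbour of `u` other than `v`; in `X` it would be adjacent to both `u`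
and `v`. Both are excluded, so no vertex extends the clique `R ∪ {u, v}`.
-/

namespace SimpleGraph

variable {V : Type*} {G : SimpleGraph V}

theorem IsClique.union {s t : Set V} (hs : G.IsClique s) (ht : G.IsClique t)
    (hst : ∀ a ∈ s, ∀ b ∈ t, a ≠ b → G.Adj a b) : G.IsClique (s ∪ t) :=
  have : Std.Symm G.Adj := ⟨fun _ _ h => h.symm⟩
  Set.pairwise_union_of_symm.2 ⟨hs, ht, hst⟩

theorem maximalClique_of_forall_not_adj {S : Set V} (hS : G.IsClique S)
    (hmax : ∀ t ∉ S, ¬ ∀ s ∈ S, G.Adj t s) : MaximalClique G S := by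
  refine ⟨hS, fun T hT hST => hST.antisymm fun t htT => ?_⟩
  by_contra htS
  exact hmax t htS fun s hs => hT htT (hST hs) fun h => htS (h ▸ hs)

end SimpleGraph

theorem stmt_10_general {V : Type*} (G : SimpleGraph V) (R P X : Set V)
    (hR : G.IsClique R)
    (hadj : ∀ x ∈ P ∪ X, ∀ r ∈ R, G.Adj x r)
    (hclosed : ∀ x, (∀ r ∈ R, G.Adj x r) → x ∈ R ∪ P ∪ X)
    (u v : V) (hu : u ∈ P)
    (hNu : G.neighborSet u ∩ P = {v})
    (hw : ¬ ∃ w ∈ X, G.Adj w u ∧ G.Adj w v) :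
    MaximalClique G (R ∪ {u, v}) := by
  obtain ⟨huv, hv⟩ : G.Adj u v ∧ v ∈ P := hNu.symm.subset rfl
  have hclique : G.IsClique (R ∪ {u, v}) :=
    hR.union (isClique_pair.2 fun _ => huv) <| by
      rintro r hr _ (rfl | rfl) -
      exacts [(hadj _ (.inl hu) r hr).symm, (hadj _ (.inl hv) r hr).symm]
  refine maximalClique_of_forall_not_adj hclique fun t ht hcommon => ?_
  have htu : G.Adj t u := hcommon u (.inr (.inl rfl))
  have htv : G.Adj t v := hcommon v (.inr (.inr rfl))
  rcases hclosed t fun r hr => hcommon r (.inl hr) with (htR | htP) | htX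
  · exact ht (.inl htR)
  · have : t ∈ G.neighborSet u ∩ P := ⟨htu.symm, htP⟩
    exact ht (.inr (.inr (hNu ▸ this)))
  · exact hw ⟨t, htX, htu, htv⟩

theorem stmt_10 {V : Type*} [Fintype V] (G : SimpleGraph V) (R P X : Set V)
    (hR : G.IsClique R)
    (hadj : ∀ x ∈ P ∪ X, ∀ r ∈ R, G.Adj x r)
    (hdisj : Disjoint P X)
    (hclosed : ∀ x, (∀ r ∈ R, G.Adj x r) → x ∈ R ∪ P ∪ X)
    (u v : V) (hu : u ∈ P)
    (hNu : G.neighborSet u ∩ P = {v})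
    (hw : ¬ ∃ w ∈ X, G.Adj w u ∧ G.Adj w v) :
    MaximalClique G (R ∪ {u, v}) :=
  stmt_10_general G R P X hR hadj hclosed u v hu hNu hw
end

section
/- Let (R, P, X) be a subproblem where R is a clique, every vertex of P ∪ X is adjacent to all of R, and every vertex adjacent to all of R lies in R ∪ P ∪ X. Let u, v ∈ X with N(u) ∩ P ⊆ N(v) ∩ P. Then for any S ⊆ P, the clique R ∪ S fails the maximality test against X (i.e., some vertex of X is adjacent to all of R ∪ S) if and only if it fails the maximality test against X \ {u}. -/
open SimpleGraph

lemma forall_adj_union_of_neighborSet_inter_subset {V : Type*} {G : SimpleGraph V}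
    {R P S : Set V} {u v : V} (hvR : ∀ r ∈ R, G.Adj v r)
    (hsub : G.neighborSet u ∩ P ⊆ G.neighborSet v ∩ P) (hSP : S ⊆ P)
    (hu : ∀ y ∈ R ∪ S, G.Adj u y) : ∀ y ∈ R ∪ S, G.Adj v y := by
  rintro y (hyR | hyS)
  · exact hvR y hyR
  · exact (hsub ⟨hu y (Or.inr hyS), hSP hyS⟩).1

theorem stmt_13_general {V : Type*} (G : SimpleGraph V) (R P X : Set V)
    (hadj : ∀ x ∈ P ∪ X, ∀ r ∈ R, G.Adj x r)
    (u v : V) (hv : v ∈ X) (hne : u ≠ v)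
    (hsub : G.neighborSet u ∩ P ⊆ G.neighborSet v ∩ P) :
    ∀ S ⊆ P, G.IsClique (R ∪ S) →
      ((∃ w ∈ X, ∀ y ∈ R ∪ S, G.Adj w y) ↔
        (∃ w ∈ X \ {u}, ∀ y ∈ R ∪ S, G.Adj w y)) := by
  intro S hSP _
  refine ⟨?_, fun ⟨w, hw, hwall⟩ => ⟨w, hw.1, hwall⟩⟩
  rintro ⟨w, hw, hwall⟩
  obtain rfl | hwu := eq_or_ne w u
  · exact ⟨v, ⟨hv, hne.symm⟩,
      forall_adj_union_of_neighborSet_inter_subset (hadj v (Or.inr hv)) hsub hSP hwall⟩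
  · exact ⟨w, ⟨hw, hwu⟩, hwall⟩

theorem stmt_13 {V : Type*} [Fintype V] (G : SimpleGraph V) (R P X : Set V)
    (hR : G.IsClique R)
    (hadj : ∀ x ∈ P ∪ X, ∀ r ∈ R, G.Adj x r)
    (hdisj : Disjoint P X)
    (hclosed : ∀ x, (∀ r ∈ R, G.Adj x r) → x ∈ R ∪ P ∪ X)
    (u v : V) (hu : u ∈ X) (hv : v ∈ X) (hne : u ≠ v)
    (hsub : G.neighborSet u ∩ P ⊆ G.neighborSet v ∩ P) :
    ∀ S ⊆ P, G.IsClique (R ∪ S) →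
      ((∃ w ∈ X, ∀ y ∈ R ∪ S, G.Adj w y) ↔
        (∃ w ∈ X \ {u}, ∀ y ∈ R ∪ S, G.Adj w y)) :=
  stmt_13_general G R P X hadj u v hv hne hsub
end
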